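/- arXiv:1707.09762 — 5 statements merged into one kernel-verified Lean document; each statement's English description precedes it below -/
import Mathlib

section
/- Let A be a unital C*-algebra and let a, c be elements of the open unit ball of A (i.e. ‖a‖ < 1 and ‖c‖ < 1). Then (1 - a c*) (1 - c c*)⁻¹ (1 - c a*) - (1 - a a*) = (c - a) c* (1 - c c*)⁻¹ c (c - a)* + (c - a)(c - a)*, and in particular this element is nonnegative (≥ 0) in A. -/
/-!
Write `u = 1 - c c*` and `x = (c - a) c*`. Then `1 - a c* = u + x` and `1 - c a* = u + x*`, so
`(u + x) u⁻¹ (u + x*) = u + x + x* + x u⁻¹ x*`, and `u + x + x* - (1 - a a*) = (c - a)(c - a)*`.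
When `‖c‖ < 1`, `u` is invertible and positive, hence so is `u⁻¹`, and both terms
`x u⁻¹ x*` and `(c - a)(c - a)*` are nonnegative.
-/

lemma add_mul_ringInverse_mul_add {R : Type*} [Ring R] {u : R} (hu : IsUnit u) (x y : R) :
    (u + x) * Ring.inverse u * (u + y) = u + x + y + x * Ring.inverse u * y := by
  simp only [add_mul, mul_add, Ring.mul_inverse_cancel u hu, Ring.inverse_mul_cancel u hu,
    one_mul, mul_one, mul_assoc]
  abel

lemma one_sub_mul_star_conj_ringInverse_sub {R : Type*} [Ring R] [StarRing R] (a c : R)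
    (hc : IsUnit (1 - c * star c)) :
    (1 - a * star c) * Ring.inverse (1 - c * star c) * (1 - c * star a) - (1 - a * star a)
      = (c - a) * star c * Ring.inverse (1 - c * star c) * c * star (c - a)
        + (c - a) * star (c - a) := by
  have hleft : 1 - a * star c = (1 - c * star c) + (c - a) * star c := by noncomm_ring
  have hright : 1 - c * star a = (1 - c * star c) + star ((c - a) * star c) := by
    simp only [star_mul, star_star, star_sub]
    noncomm_ring
  rw [hleft, hright, add_mul_ringInverse_mul_add hc]
  simp only [star_mul, star_star, star_sub]
  noncomm_ring

lemma isStrictlyPositive_one_sub_mul_star_self {A : Type*} [CStarAlgebra A] [PartialOrder A]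
    [StarOrderedRing A] {c : A} (hc : ‖c‖ < 1) : IsStrictlyPositive (1 - c * star c) := by
  have hnorm : ‖c * star c‖ < 1 := by
    rw [CStarRing.norm_self_mul_star]
    nlinarith [norm_nonneg c]
  have hle : c * star c ≤ 1 :=
    (CStarAlgebra.norm_le_one_iff_of_nonneg _ (mul_star_self_nonneg c)).mp hnorm.le
  exact (isUnit_one_sub_of_norm_lt_one hnorm).isStrictlyPositive (sub_nonneg.mpr hle)

theorem stmt_0_general {A : Type*} [CStarAlgebra A] [PartialOrder A] [StarOrderedRing A]
    (a c : A) (hc : ‖c‖ < 1) :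
    (1 - a * star c) * Ring.inverse (1 - c * star c) * (1 - c * star a) - (1 - a * star a)
      = (c - a) * star c * Ring.inverse (1 - c * star c) * c * star (c - a)
        + (c - a) * star (c - a) ∧
    0 ≤ (1 - a * star c) * Ring.inverse (1 - c * star c) * (1 - c * star a)
        - (1 - a * star a) := by
  have hpos := isStrictlyPositive_one_sub_mul_star_self hc
  have hid := one_sub_mul_star_conj_ringInverse_sub a c hpos.isUnit
  refine ⟨hid, hid ▸ add_nonneg ?_ (mul_star_self_nonneg _)⟩
  have hconj : (c - a) * star c * Ring.inverse (1 - c * star c) * c * star (c - a)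
      = (c - a) * star c * Ring.inverse (1 - c * star c) * star ((c - a) * star c) := by
    simp only [star_mul, star_star, mul_assoc]
  rw [hconj]
  exact star_right_conjugate_nonneg hpos.ringInverse.nonneg _

theorem stmt_0 {A : Type*} [CStarAlgebra A] [PartialOrder A] [StarOrderedRing A]
    (a c : A) (ha : ‖a‖ < 1) (hc : ‖c‖ < 1) :
    (1 - a * star c) * Ring.inverse (1 - c * star c) * (1 - c * star a) - (1 - a * star a)
      = (c - a) * star c * Ring.inverse (1 - c * star c) * c * star (c - a)
        + (c - a) * star (c - a) ∧
    0 ≤ (1 - a * star c) * Ring.inverse (1 - c * star c) * (1 - c * star a)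
        - (1 - a * star a) :=
  stmt_0_general a c hc
end

section
/- Let A be a unital C*-algebra and let a, c, b ∈ A with ‖a‖ < 1 and ‖c‖ < 1. Then the 2×2 operator matrix [[a, b],[0, c]] has norm strictly less than 1 if and only if (1 - a a*)^{-1/2} b (1 - c* c)⁻¹ b* (1 - a a*)^{-1/2} < 1 (i.e. 1 minus this element is positive and invertible). -/
open Matrix

/-- Nonnegativity in the C*-algebra `M₂(A)` of 2×2 matrices over a unital C*-algebra `A`:
an element is nonnegative iff it is of the form `z* z`. -/
def matNonneg {A : Type*} [CStarAlgebra A] {n : ℕ}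
    (X : Matrix (Fin n) (Fin n) A) : Prop :=
  ∃ z : Matrix (Fin n) (Fin n) A, star z * z = X

/-- Positive and invertible in `Mₙ(A)`. -/
def matPosInv {A : Type*} [CStarAlgebra A] {n : ℕ}
    (X : Matrix (Fin n) (Fin n) A) : Prop :=
  matNonneg X ∧ IsUnit X

/-- `x⁻¹ᐟ²`: the inverse of the square root, via continuous functional calculus. -/
noncomputable def invSqrt {A : Type*} [CStarAlgebra A] [PartialOrder A] [StarOrderedRing A]
    (x : A) : A :=
  Ring.inverse (CFC.sqrt x)

/-!
`1 - X X*` has the block form `[[P, Q], [Q*, R]]` with `R = 1 - c c*` strictly positive, so the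
Schur complement factorisation `L* diag(S, R) L`, with `L` unitriangular, reduces positivity and
invertibility of `1 - X X*` to that of `S = P - Q R⁻¹ Q*`. The push-through identity
`(1 - c* c)⁻¹ = 1 + c* (1 - c c*)⁻¹ c` turns `S` into `(1 - a a*) - b (1 - c* c)⁻¹ b*`, and
conjugating by the self-adjoint unit `(1 - a a*)^{-1/2}` turns that into the stated condition.
-/

open scoped Ring

section Monoid
variable {M : Type*} [Monoid M] [StarMul M]

lemma exists_star_mul_self_eq_star_conjugate_iff {u x : M} (hu : IsUnit u) :
    (∃ z, star z * z = star u * x * u) ↔ ∃ z, star z * z = x := by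
  lift u to Mˣ using hu
  constructor
  · rintro ⟨z, hz⟩
    refine ⟨z * ↑u⁻¹, ?_⟩
    rw [star_mul, mul_assoc, ← mul_assoc (star z), hz]
    simp only [mul_assoc, Units.mul_inv, mul_one]
    rw [← mul_assoc, ← star_mul, Units.mul_inv, star_one, one_mul]
  · rintro ⟨z, rfl⟩
    exact ⟨z * u, by simp only [star_mul, mul_assoc]⟩

end Monoid

section Ring
variable {R : Type*} [Ring R]

lemma Ring.inverse_one_sub_mul_comm {c d : R} (h : IsUnit (1 - c * d)) :
    (1 - d * c)⁻¹ʳ = 1 + d * (1 - c * d)⁻¹ʳ * c := by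
  set r := (1 - c * d)⁻¹ʳ
  have hr : (1 - c * d) * r = 1 := Ring.mul_inverse_cancel _ h
  have hr' : r * (1 - c * d) = 1 := Ring.inverse_mul_cancel _ h
  have hu : (1 - d * c) * (1 + d * r * c) = 1 := by
    calc (1 - d * c) * (1 + d * r * c) = 1 - d * c + d * ((1 - c * d) * r) * c := by noncomm_ring
      _ = 1 := by rw [hr]; noncomm_ring
  have hu' : (1 + d * r * c) * (1 - d * c) = 1 := by
    calc (1 + d * r * c) * (1 - d * c) = 1 - d * c + d * (r * (1 - c * d)) * c := by noncomm_ring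
      _ = 1 := by rw [hr']; noncomm_ring
  exact Ring.inverse_unit ⟨_, _, hu, hu'⟩

lemma isUnit_unitriangular_fin_two (p : R) : IsUnit !![1, 0; p, 1] :=
  ⟨⟨!![1, 0; p, 1], !![1, 0; -p, 1], by simp [one_fin_two], by simp [one_fin_two]⟩, rfl⟩

lemma fin_two_eq_star_mul_diagonal_mul [StarRing R] (P Q D : R) (hD : IsUnit D)
    (hD' : IsSelfAdjoint D) :
    !![P, Q; star Q, D] = star !![1, 0; D⁻¹ʳ * star Q, 1] *
      diagonal ![P - Q * D⁻¹ʳ * star Q, D] * !![1, 0; D⁻¹ʳ * star Q, 1] := by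
  have hstar : star (D⁻¹ʳ * star Q) = Q * D⁻¹ʳ := by
    rw [star_mul, star_star, hD'.ringInverse.star_eq]
  ext i j
  fin_cases i <;> fin_cases j <;>
    simp [star_eq_conjTranspose, mul_apply, Fin.sum_univ_two, hstar, mul_assoc,
      Ring.inverse_mul_cancel _ hD, Ring.mul_inverse_cancel_left _ _ hD]

lemma isUnit_diagonal_iff_forall {ι : Type*} [Fintype ι] [DecidableEq ι] {d : ι → R} :
    IsUnit (diagonal d) ↔ ∀ i, IsUnit (d i) := by
  refine ⟨fun h i => ?_, fun h => (Pi.isUnit_iff.mpr h).map (diagonalRingHom ι R)⟩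
  obtain ⟨u, hu⟩ := h
  have hl := congrFun₂ u.inv_mul i i
  have hr := congrFun₂ u.mul_inv i i
  rw [hu] at hl hr
  simp only [mul_diagonal, diagonal_mul, one_apply_eq] at hl hr
  exact ⟨⟨d i, _, hr, hl⟩, rfl⟩

end Ring

section Matrix
variable {A : Type*} [CStarAlgebra A] {n : ℕ}

lemma matNonneg_diagonal_iff [PartialOrder A] [StarOrderedRing A] {d : Fin n → A} :
    matNonneg (diagonal d) ↔ ∀ i, 0 ≤ d i := by
  constructor
  · rintro ⟨z, hz⟩ i
    have := congrFun₂ hz i i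
    rw [diagonal_apply_eq, mul_apply] at this
    rw [← this]
    exact Finset.sum_nonneg fun k _ => by simp [star_mul_self_nonneg]
  · intro h
    refine ⟨diagonal fun i => CFC.sqrt (d i), ?_⟩
    rw [star_eq_conjTranspose, diagonal_conjTranspose, diagonal_mul_diagonal]
    congr 1
    funext i
    simp [CFC.sqrt_nonneg (d i) |>.isSelfAdjoint.star_eq, CFC.sqrt_mul_sqrt_self (d i) (h i)]

lemma matPosInv_diagonal_iff [PartialOrder A] [StarOrderedRing A] {d : Fin n → A} :
    matPosInv (diagonal d) ↔ ∀ i, IsStrictlyPositive (d i) := by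
  simp only [matPosInv, matNonneg_diagonal_iff, isUnit_diagonal_iff_forall,
    IsStrictlyPositive.iff_of_unital, forall_and]

lemma matPosInv_star_conjugate_iff {U X : Matrix (Fin n) (Fin n) A} (hU : IsUnit U) :
    matPosInv (star U * X * U) ↔ matPosInv X := by
  unfold matPosInv matNonneg
  rw [exists_star_mul_self_eq_star_conjugate_iff hU]
  lift U to (Matrix (Fin n) (Fin n) A)ˣ using hU
  rw [← Units.coe_star, Units.isUnit_mul_units, Units.isUnit_units_mul]

end Matrix

section CStarAlgebra
variable {A : Type*} [CStarAlgebra A] [PartialOrder A] [StarOrderedRing A]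

lemma isStrictlyPositive_one_sub_mul_star {x : A} (hx : ‖x‖ < 1) :
    IsStrictlyPositive (1 - x * star x) := by
  have hnorm : ‖x * star x‖ < 1 := by
    rw [CStarRing.norm_self_mul_star]
    nlinarith [norm_nonneg x]
  refine (isUnit_one_sub_of_norm_lt_one hnorm).isStrictlyPositive (sub_nonneg.mpr ?_)
  exact (CStarAlgebra.norm_le_one_iff_of_nonneg _ (mul_star_self_nonneg x)).mp hnorm.le

lemma IsStrictlyPositive.invSqrt {x : A} (hx : IsStrictlyPositive x) :
    IsStrictlyPositive (invSqrt x) :=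
  (hx.sqrt x).ringInverse

lemma invSqrt_mul_self_mul_invSqrt {x : A} (hx : IsStrictlyPositive x) :
    invSqrt x * x * invSqrt x = 1 := by
  have hs : IsUnit (CFC.sqrt x) := (hx.sqrt x).isUnit
  calc invSqrt x * x * invSqrt x
      = (CFC.sqrt x)⁻¹ʳ * (CFC.sqrt x * CFC.sqrt x) * (CFC.sqrt x)⁻¹ʳ := by
        rw [CFC.sqrt_mul_sqrt_self x hx.nonneg, invSqrt]
    _ = 1 := by rw [Ring.inverse_mul_cancel_left _ _ hs, Ring.mul_inverse_cancel _ hs]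

lemma isStrictlyPositive_sub_iff_one_sub_invSqrt_conj {x : A} (hx : IsStrictlyPositive x)
    (y : A) :
    IsStrictlyPositive (x - y) ↔ IsStrictlyPositive (1 - invSqrt x * y * invSqrt x) := by
  have hd := hx.invSqrt
  rw [← hd.isUnit.isStrictlyPositive_iff_conjugate_of_isSelfAdjoint _ _ hd.isSelfAdjoint,
    mul_sub, sub_mul, invSqrt_mul_self_mul_invSqrt hx]

end CStarAlgebra

theorem stmt_2 {A : Type*} [CStarAlgebra A] [PartialOrder A] [StarOrderedRing A]
    (a b c : A) (ha : ‖a‖ < 1) (hc : ‖c‖ < 1) :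
    matPosInv (1 - (!![a, b; 0, c]) * star (!![a, b; 0, c])) ↔
      (0 ≤ 1 - invSqrt (1 - a * star a) * b * Ring.inverse (1 - star c * c) * star b *
            invSqrt (1 - a * star a) ∧
        IsUnit (1 - invSqrt (1 - a * star a) * b * Ring.inverse (1 - star c * c) * star b *
            invSqrt (1 - a * star a))) := by
  have hA := isStrictlyPositive_one_sub_mul_star ha
  have hC := isStrictlyPositive_one_sub_mul_star hc
  have hblock : 1 - !![a, b; 0, c] * star !![a, b; 0, c] =
      !![1 - a * star a - b * star b, -(b * star c); star (-(b * star c)), 1 - c * star c] := by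
    ext i j
    fin_cases i <;> fin_cases j <;>
      simp [star_eq_conjTranspose, vecMul, dotProduct, Fin.sum_univ_two, sub_sub]
  have hschur : 1 - a * star a - b * star b -
        -(b * star c) * (1 - c * star c)⁻¹ʳ * star (-(b * star c)) =
      (1 - a * star a) - b * (1 - star c * c)⁻¹ʳ * star b := by
    rw [Ring.inverse_one_sub_mul_comm hC.isUnit]
    simp only [star_neg, star_mul, star_star]
    noncomm_ring
  rw [hblock, fin_two_eq_star_mul_diagonal_mul _ _ _ hC.isUnit hC.isSelfAdjoint,
    matPosInv_star_conjugate_iff (isUnit_unitriangular_fin_two _), matPosInv_diagonal_iff,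
    Fin.forall_fin_two]
  simp only [cons_val_zero, cons_val_one]
  rw [and_iff_left hC, hschur, isStrictlyPositive_sub_iff_one_sub_invSqrt_conj hA]
  simp only [mul_assoc, IsStrictlyPositive.iff_of_unital]
end

section
/- Let D be a noncommutative subset of V_nc satisfying unitary invariance and the converse direct-sum property. Then for a₁, a₂ ∈ D_n, c₁, c₂ ∈ D_m, b₁₂ ∈ V^{n×m}, b₂₁ ∈ V^{m×n}: δ_D(diag(a₁,c₁), diag(a₂,c₂))([[0, b₁₂],[b₂₁, 0]]) = max{ δ_D(a₁,c₂)(b₁₂), δ_D(c₁,a₂)(b₂₁) }. -/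
open Matrix
open scoped ENNReal

variable {V : Type*} [AddCommGroup V] [Module ℂ V]

/-- The block upper-triangular matrix [[a, b],[0, c]], reindexed to size `n + m`. -/
def blkV {n m : ℕ} (a : Matrix (Fin n) (Fin n) V) (b : Matrix (Fin n) (Fin m) V)
    (c : Matrix (Fin m) (Fin m) V) : Matrix (Fin (n + m)) (Fin (n + m)) V :=
  Matrix.reindex finSumFinEquiv finSumFinEquiv (Matrix.fromBlocks a b 0 c)

/-- The pseudometric `δ_D(a,c)(b) = [sup{t : [[a, s b],[0, c]] ∈ D_{n+m} ∀ s ∈ [0,t]}]⁻¹`,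
valued in `[0, ∞]` (with the conventions `1/0 = ∞`, `1/∞ = 0`). -/
noncomputable def ncDelta (D : ∀ n, Set (Matrix (Fin n) (Fin n) V)) {n m : ℕ}
    (a : Matrix (Fin n) (Fin n) V) (c : Matrix (Fin m) (Fin m) V)
    (b : Matrix (Fin n) (Fin m) V) : ℝ≥0∞ :=
  (sSup {t : ℝ≥0∞ | ∀ s : ℝ, 0 ≤ s → ENNReal.ofReal s ≤ t →
      blkV a ((s : ℂ) • b) c ∈ D (n + m)})⁻¹

/-- `δ̃_D(a,c) = δ_D(a,c)(a-c)`. -/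
noncomputable def ncDeltaT (D : ∀ n, Set (Matrix (Fin n) (Fin n) V)) {n : ℕ}
    (a c : Matrix (Fin n) (Fin n) V) : ℝ≥0∞ :=
  ncDelta D a c (a - c)

/-- Left multiplication of a matrix over `V` by a scalar (complex) matrix. -/
def scalarMulL {n m l : ℕ} (S : Matrix (Fin n) (Fin m) ℂ)
    (a : Matrix (Fin m) (Fin l) V) : Matrix (Fin n) (Fin l) V :=
  Matrix.of fun i j => ∑ r, S i r • a r j

/-- Right multiplication of a matrix over `V` by a scalar (complex) matrix. -/
def scalarMulR {n m l : ℕ} (a : Matrix (Fin n) (Fin m) V)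
    (T : Matrix (Fin m) (Fin l) ℂ) : Matrix (Fin n) (Fin l) V :=
  Matrix.of fun i j => ∑ r, T r j • a i r

/-- `D` respects direct sums: `a ∈ D_n, c ∈ D_m ⟹ diag(a,c) ∈ D_{n+m}`. -/
def RespectsDirectSums (D : ∀ n, Set (Matrix (Fin n) (Fin n) V)) : Prop :=
  ∀ ⦃n m : ℕ⦄ (a : Matrix (Fin n) (Fin n) V) (c : Matrix (Fin m) (Fin m) V),
    a ∈ D n → c ∈ D m → blkV a 0 c ∈ D (n + m)

/-- `D` is invariant under conjugation by scalar unitary matrices. -/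
def UnitaryInvariant (D : ∀ n, Set (Matrix (Fin n) (Fin n) V)) : Prop :=
  ∀ ⦃n : ℕ⦄ (U : Matrix (Fin n) (Fin n) ℂ), U ∈ Matrix.unitaryGroup (Fin n) ℂ →
    ∀ a ∈ D n, scalarMulL U (scalarMulR a Uᴴ) ∈ D n

/-- Converse direct-sum property: `diag(a,c) ∈ D_{n+m} ⟹ a ∈ D_n ∧ c ∈ D_m`. -/
def ConverseDirectSums (D : ∀ n, Set (Matrix (Fin n) (Fin n) V)) : Prop :=
  ∀ ⦃n m : ℕ⦄ (a : Matrix (Fin n) (Fin n) V) (c : Matrix (Fin m) (Fin m) V),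
    blkV a 0 c ∈ D (n + m) → a ∈ D n ∧ c ∈ D m

/-- The counter-diagonal matrix [[0, b₁₂],[b₂₁, 0]], reindexed to size `n + m`. -/
def offDiagV {n m : ℕ} (b₁₂ : Matrix (Fin n) (Fin m) V) (b₂₁ : Matrix (Fin m) (Fin n) V) :
    Matrix (Fin (n + m)) (Fin (n + m)) V :=
  Matrix.reindex finSumFinEquiv finSumFinEquiv (Matrix.fromBlocks 0 b₁₂ b₂₁ 0)


/-!
Conjugating by the permutation that reorders the diagonal blocks `(a₁, c₁, a₂, c₂)` as
`(a₁, c₂, c₁, a₂)` turns `[[diag(a₁,c₁), s•b], [0, diag(a₂,c₂)]]` with `b = [[0,b₁₂],[b₂₁,0]]`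
into the direct sum of `[[a₁, s•b₁₂], [0, c₂]]` and `[[c₁, s•b₂₁], [0, a₂]]`. By unitary
invariance and the two direct-sum properties, the former lies in `D` iff both summands do, so
the admissible scales for the left-hand side are the intersection of those for the two
right-hand sides. All three are lower sets of `[0, ∞]`, hence totally ordered by inclusion, so
the supremum of the intersection is the minimum of the suprema, and inversion makes it a maximum.
-/

theorem IsLowerSet.sSup_inter {α : Type*} [CompleteLinearOrder α] {s t : Set α}
    (hs : IsLowerSet s) (ht : IsLowerSet t) : sSup (s ∩ t) = min (sSup s) (sSup t) := by
  rcases hs.total ht with h | h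
  · rw [Set.inter_eq_left.2 h, min_eq_left (sSup_le_sSup h)]
  · rw [Set.inter_eq_right.2 h, min_eq_right (sSup_le_sSup h)]

theorem Matrix.permMatrix_mem_unitaryGroup {ι R : Type*} [DecidableEq ι] [Fintype ι]
    [CommRing R] [StarRing R] (σ : Equiv.Perm ι) :
    σ.permMatrix R ∈ unitaryGroup ι R := by
  rw [mem_unitaryGroup_iff, star_eq_conjTranspose, conjTranspose_permMatrix, ← permMatrix_mul,
    inv_mul_cancel, permMatrix_one]

theorem scalarMulL_permMatrix_scalarMulR {k : ℕ} (σ : Equiv.Perm (Fin k))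
    (a : Matrix (Fin k) (Fin k) V) :
    scalarMulL (σ.permMatrix ℂ) (scalarMulR a (σ.permMatrix ℂ)ᴴ) = a.submatrix σ σ := by
  ext i j
  simp [scalarMulL, scalarMulR, PEquiv.toMatrix_apply, ite_smul]

theorem UnitaryInvariant.submatrix_mem {D : ∀ n, Set (Matrix (Fin n) (Fin n) V)}
    (huni : UnitaryInvariant D) {k : ℕ} (σ : Equiv.Perm (Fin k)) {a : Matrix (Fin k) (Fin k) V}
    (ha : a ∈ D k) : a.submatrix σ σ ∈ D k := by
  simpa only [scalarMulL_permMatrix_scalarMulR] using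
    huni _ (permMatrix_mem_unitaryGroup σ) a ha

theorem UnitaryInvariant.reindex_mem {D : ∀ n, Set (Matrix (Fin n) (Fin n) V)}
    (huni : UnitaryInvariant D) {k l : ℕ} (e : Fin k ≃ Fin l) {a : Matrix (Fin k) (Fin k) V}
    (ha : a ∈ D k) : reindex e e a ∈ D l := by
  obtain rfl := Fin.equiv_iff_eq.1 ⟨e⟩
  exact huni.submatrix_mem e.symm ha

def finSumFinSumEquiv (p q r s : ℕ) :
    (Fin p ⊕ Fin q) ⊕ (Fin r ⊕ Fin s) ≃ Fin ((p + q) + (r + s)) :=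
  (Equiv.sumCongr finSumFinEquiv finSumFinEquiv).trans finSumFinEquiv

def blockShuffle (n m : ℕ) : Fin ((n + m) + (m + n)) ≃ Fin ((n + m) + (n + m)) :=
  (finSumFinSumEquiv n m m n).symm.trans <|
    ((Equiv.sumSumSumComm _ _ _ _).trans (Equiv.sumCongr (Equiv.refl _) (Equiv.sumComm _ _))).trans
      (finSumFinSumEquiv n m n m)

section

variable {W : Type*} [AddCommGroup W]

theorem blkV_blkV_offDiagV {n m : ℕ} (a₁ a₂ : Matrix (Fin n) (Fin n) W)
    (c₁ c₂ : Matrix (Fin m) (Fin m) W) (b₁₂ : Matrix (Fin n) (Fin m) W)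
    (b₂₁ : Matrix (Fin m) (Fin n) W) :
    blkV (blkV a₁ 0 c₁) (offDiagV b₁₂ b₂₁) (blkV a₂ 0 c₂) =
      reindex (blockShuffle n m) (blockShuffle n m)
        (blkV (blkV a₁ b₁₂ c₂) 0 (blkV c₁ b₂₁ a₂)) := by
  ext i j
  obtain ⟨p, rfl⟩ := (finSumFinSumEquiv n m n m).surjective i
  obtain ⟨q, rfl⟩ := (finSumFinSumEquiv n m n m).surjective j
  rcases p with (p | p) | (p | p) <;> rcases q with (q | q) | (q | q) <;>
    simp [blkV, offDiagV, blockShuffle, finSumFinSumEquiv, -finSumFinEquiv_apply_left,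
      -finSumFinEquiv_apply_right]

end

theorem blkV_blkV_offDiagV_mem_iff {D : ∀ n, Set (Matrix (Fin n) (Fin n) V)}
    (hds : RespectsDirectSums D) (huni : UnitaryInvariant D) (hconv : ConverseDirectSums D)
    {n m : ℕ} (a₁ a₂ : Matrix (Fin n) (Fin n) V) (c₁ c₂ : Matrix (Fin m) (Fin m) V)
    (b₁₂ : Matrix (Fin n) (Fin m) V) (b₂₁ : Matrix (Fin m) (Fin n) V) :
    blkV (blkV a₁ 0 c₁) (offDiagV b₁₂ b₂₁) (blkV a₂ 0 c₂) ∈ D ((n + m) + (n + m)) ↔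
      blkV a₁ b₁₂ c₂ ∈ D (n + m) ∧ blkV c₁ b₂₁ a₂ ∈ D (m + n) := by
  rw [blkV_blkV_offDiagV]
  refine ⟨fun h => hconv _ _ ?_, fun h => huni.reindex_mem _ (hds _ _ h.1 h.2)⟩
  simpa using huni.reindex_mem (blockShuffle n m).symm h

theorem smul_offDiagV {n m : ℕ} (z : ℂ) (b₁₂ : Matrix (Fin n) (Fin m) V)
    (b₂₁ : Matrix (Fin m) (Fin n) V) :
    z • offDiagV b₁₂ b₂₁ = offDiagV (z • b₁₂) (z • b₂₁) := by
  simp only [offDiagV, ← coe_reindexLinearEquiv ℂ, ← map_smul, fromBlocks_smul, smul_zero]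

theorem isLowerSet_setOf_forall_ofReal_le (P : ℝ → Prop) :
    IsLowerSet {t : ℝ≥0∞ | ∀ s : ℝ, 0 ≤ s → ENNReal.ofReal s ≤ t → P s} :=
  fun _ _ hts ht s hs hst => ht s hs (hst.trans hts)

theorem ncDelta_eq_max_of_mem_iff {D : ∀ n, Set (Matrix (Fin n) (Fin n) V)}
    {n m n₁ m₁ n₂ m₂ : ℕ} {a : Matrix (Fin n) (Fin n) V} {c : Matrix (Fin m) (Fin m) V}
    {b : Matrix (Fin n) (Fin m) V} {a₁ : Matrix (Fin n₁) (Fin n₁) V}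
    {c₁ : Matrix (Fin m₁) (Fin m₁) V} {b₁ : Matrix (Fin n₁) (Fin m₁) V}
    {a₂ : Matrix (Fin n₂) (Fin n₂) V} {c₂ : Matrix (Fin m₂) (Fin m₂) V}
    {b₂ : Matrix (Fin n₂) (Fin m₂) V}
    (h : ∀ s : ℝ, blkV a ((s : ℂ) • b) c ∈ D (n + m) ↔
      blkV a₁ ((s : ℂ) • b₁) c₁ ∈ D (n₁ + m₁) ∧ blkV a₂ ((s : ℂ) • b₂) c₂ ∈ D (n₂ + m₂)) :
    ncDelta D a c b = max (ncDelta D a₁ c₁ b₁) (ncDelta D a₂ c₂ b₂) := by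
  simp only [ncDelta, h, imp_and, forall_and, Set.ofPred_and]
  rw [IsLowerSet.sSup_inter (isLowerSet_setOf_forall_ofReal_le _)
      (isLowerSet_setOf_forall_ofReal_le _),
    Antitone.map_min fun _ _ => ENNReal.inv_le_inv']

theorem stmt_7_general (D : ∀ n, Set (Matrix (Fin n) (Fin n) V))
    (hds : RespectsDirectSums D) (huni : UnitaryInvariant D) (hconv : ConverseDirectSums D)
    {n m : ℕ} (a₁ a₂ : Matrix (Fin n) (Fin n) V) (c₁ c₂ : Matrix (Fin m) (Fin m) V)
    (b₁₂ : Matrix (Fin n) (Fin m) V) (b₂₁ : Matrix (Fin m) (Fin n) V) :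
    ncDelta D (blkV a₁ 0 c₁) (blkV a₂ 0 c₂) (offDiagV b₁₂ b₂₁)
      = max (ncDelta D a₁ c₂ b₁₂) (ncDelta D c₁ a₂ b₂₁) :=
  ncDelta_eq_max_of_mem_iff fun s => by
    rw [smul_offDiagV]
    exact blkV_blkV_offDiagV_mem_iff hds huni hconv a₁ a₂ c₁ c₂ _ _

theorem stmt_7 (D : ∀ n, Set (Matrix (Fin n) (Fin n) V))
    (hds : RespectsDirectSums D) (huni : UnitaryInvariant D) (hconv : ConverseDirectSums D)
    {n m : ℕ} (a₁ a₂ : Matrix (Fin n) (Fin n) V) (c₁ c₂ : Matrix (Fin m) (Fin m) V)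
    (b₁₂ : Matrix (Fin n) (Fin m) V) (b₂₁ : Matrix (Fin m) (Fin n) V)
    (ha₁ : a₁ ∈ D n) (ha₂ : a₂ ∈ D n) (hc₁ : c₁ ∈ D m) (hc₂ : c₂ ∈ D m) :
    ncDelta D (blkV a₁ 0 c₁) (blkV a₂ 0 c₂) (offDiagV b₁₂ b₂₁)
      = max (ncDelta D a₁ c₂ b₁₂) (ncDelta D c₁ a₂ b₂₁) :=
  stmt_7_general D hds huni hconv a₁ a₂ c₁ c₂ b₁₂ b₂₁
end

section
/- Let A be a unital C*-algebra and n ∈ A positive invertible. For a ∈ A with Im a := (a−a*)/(2i) > 0, the following are equivalent: (1) a* (Im a)⁻¹ a ≤ n; (2) n^{-1/2} (Im a) n^{-1/2} + n^{-1/2} (Re a) (Im a)⁻¹ (Re a) n^{-1/2} ≤ 1; (3) Im(−a⁻¹) ≥ n⁻¹. -/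
/-!
With `b = Im a` and `c = Re a` we have `a = c + i b` and `a* = c - i b`, hence
`a* b⁻¹ a = b + c b⁻¹ c`, and condition (2) is condition (1) conjugated by `n^{-1/2}`.
Writing `a = b^{1/2} (t + i) b^{1/2}` with `t = b^{-1/2} c b^{-1/2}` self-adjoint shows that `a`
is invertible; then `Im (-a⁻¹) = a⁻¹ b (a*)⁻¹ = (a* b⁻¹ a)⁻¹`, so (1) ⇔ (3) is the
operator antitonicity of the inverse on strictly positive elements.
-/

/-- The real part `(x + x*)/2`. -/
noncomputable def cstarRe {A : Type*} [CStarAlgebra A] (x : A) : A :=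
  ((2 : ℂ)⁻¹) • (x + star x)

/-- The imaginary part `(x - x*)/(2i)`. -/
noncomputable def cstarIm {A : Type*} [CStarAlgebra A] (x : A) : A :=
  ((2 * Complex.I)⁻¹ : ℂ) • (x - star x)

/-- `x > 0`: positive and invertible. -/
def posInv {A : Type*} [CStarAlgebra A] [PartialOrder A] (x : A) : Prop :=
  0 ≤ x ∧ IsUnit x

open ComplexStarModule Complex Ring

section CStarAlgebra
variable {A : Type*} [CStarAlgebra A]

lemma cstarRe_eq_realPart (x : A) : cstarRe x = ℜ x := by
  rw [cstarRe, realPart_apply_coe, RCLike.real_smul_eq_coe_smul (K := ℂ)]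
  norm_num

lemma cstarIm_eq_imaginaryPart (x : A) : cstarIm x = ℑ x := by
  rw [cstarIm, imaginaryPart_apply_coe, RCLike.real_smul_eq_coe_smul (K := ℂ), smul_smul]
  congr 1
  field_simp
  norm_num

lemma IsSelfAdjoint.isUnit_algebraMap_sub {t : A} (ht : IsSelfAdjoint t) {z : ℂ}
    (hz : z.im ≠ 0) : IsUnit (algebraMap ℂ A z - t) :=
  spectrum.notMem_iff.mp fun hmem ↦ hz (by rw [ht.mem_spectrum_eq_re hmem, ofReal_im])

end CStarAlgebra

lemma star_eq_realPart_sub_I_smul_imaginaryPart {M : Type*} [AddCommGroup M] [Module ℂ M]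
    [StarAddMonoid M] [StarModule ℂ M] (a : M) : star a = ℜ a - I • ℑ a := by
  conv_lhs => rw [← realPart_add_I_smul_imaginaryPart a]
  simp [sub_eq_add_neg]

lemma sub_I_smul_mul_inverse_mul_add_I_smul {R : Type*} [Ring R] [Algebra ℂ R] {b : R}
    (hb : IsUnit b) (c : R) : (c - I • b) * b⁻¹ʳ * (c + I • b) = b + c * b⁻¹ʳ * c := by
  lift b to Rˣ using hb
  simp only [inverse_unit, sub_mul, mul_add, smul_mul_assoc, mul_smul_comm, mul_assoc,
    Units.mul_inv, Units.inv_mul, mul_one, one_mul, smul_sub, smul_smul, I_mul_I, neg_one_smul]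
  abel

section StarAlgebra
variable {A : Type*} [Ring A] [StarRing A] [Algebra ℂ A] [StarModule ℂ A]

lemma imaginaryPart_ringInverse (a : A) : (ℑ a⁻¹ʳ : A) = -(a⁻¹ʳ * ℑ a * star a⁻¹ʳ) := by
  by_cases ha : IsUnit a
  · lift a to Aˣ using ha
    have hsub : (↑a⁻¹ - star ↑a⁻¹ : A) = -(↑a⁻¹ * (↑a - star ↑a) * star ↑a⁻¹) := by
      simp only [mul_sub, sub_mul, Units.inv_mul, one_mul, mul_assoc, ← star_mul, star_one,
        mul_one]
      abel
    rw [inverse_unit, imaginaryPart_apply_coe, imaginaryPart_apply_coe, hsub]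
    simp only [mul_smul_comm, smul_mul_assoc, smul_neg]
  · simp [inverse_non_unit _ ha]

lemma star_mul_inverse_imaginaryPart_mul {a : A} (ha : IsUnit (ℑ a : A)) :
    star a * (ℑ a : A)⁻¹ʳ * a = ℑ a + ℜ a * (ℑ a : A)⁻¹ʳ * ℜ a := by
  have h := sub_I_smul_mul_inverse_mul_add_I_smul ha (ℜ a : A)
  rwa [← star_eq_realPart_sub_I_smul_imaginaryPart, realPart_add_I_smul_imaginaryPart] at h

lemma imaginaryPart_neg_ringInverse {a : A} (ha : IsUnit a) (hIm : IsUnit (ℑ a : A)) :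
    (ℑ (-a⁻¹ʳ) : A) = (star a * (ℑ a : A)⁻¹ʳ * a)⁻¹ʳ := by
  rw [map_neg, NegMemClass.coe_neg, imaginaryPart_ringInverse, neg_neg]
  lift a to Aˣ using ha
  lift (ℑ (a : A) : A) to Aˣ using hIm with b
  simp only [inverse_unit, ← Units.coe_star, ← Units.val_mul]
  simp [mul_inv_rev, mul_assoc]

end StarAlgebra

section OrderedCStarAlgebra
variable {A : Type*} [CStarAlgebra A] [PartialOrder A] [StarOrderedRing A]

lemma isUnit_of_isStrictlyPositive_imaginaryPart {a : A}
    (ha : IsStrictlyPositive (ℑ a : A)) : IsUnit a := by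
  set r := CFC.sqrt (ℑ a : A)
  have hr : IsStrictlyPositive r := ha.sqrt
  have hrr : r * r = ℑ a := CFC.sqrt_mul_sqrt_self _ ha.nonneg
  have ht : IsSelfAdjoint (r⁻¹ʳ * ℜ a * r⁻¹ʳ) :=
    (ℜ a).prop.conjugate_self hr.isSelfAdjoint.ringInverse
  have hfactor : a = -(r * (algebraMap ℂ A (-I) - r⁻¹ʳ * ℜ a * r⁻¹ʳ) * r) := by
    simp only [Algebra.algebraMap_eq_smul_one, mul_sub, sub_mul, mul_smul_comm, smul_mul_assoc,
      mul_one, hrr, mul_assoc, inverse_mul_cancel _ hr.isUnit]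
    simp only [← mul_assoc, mul_inverse_cancel _ hr.isUnit, one_mul, neg_smul, neg_sub,
      sub_neg_eq_add, realPart_add_I_smul_imaginaryPart]
  rw [hfactor]
  exact ((hr.isUnit.mul (ht.isUnit_algebraMap_sub (by simp))).mul hr.isUnit).neg

lemma CFC.conjSqrt_le_conjSqrt_iff {c a b : A} (hc : IsStrictlyPositive c) :
    CFC.conjSqrt c a ≤ CFC.conjSqrt c b ↔ a ≤ b := by
  refine ⟨fun h ↦ ?_, CFC.conjSqrt_le_conjSqrt⟩
  simpa only [CFC.conjSqrt_ringInverse_conjSqrt c _ hc] using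
    CFC.conjSqrt_le_conjSqrt (c := c⁻¹ʳ) h

lemma CStarAlgebra.ringInverse_le_ringInverse_iff {a b : A} (ha : IsStrictlyPositive a)
    (hb : IsStrictlyPositive b) : a⁻¹ʳ ≤ b⁻¹ʳ ↔ b ≤ a := by
  lift a to Aˣ using ha.isUnit
  lift b to Aˣ using hb.isUnit
  simpa only [inverse_unit] using CStarAlgebra.inv_le_inv_iff ha.nonneg hb.nonneg

lemma invSqrt_mul_mul_invSqrt (n x : A) : invSqrt n * x * invSqrt n = CFC.conjSqrt n⁻¹ʳ x := by
  rw [CFC.conjSqrt_apply, CFC.sqrt_ringInverse, invSqrt]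

end OrderedCStarAlgebra

theorem stmt_13 {A : Type*} [CStarAlgebra A] [PartialOrder A] [StarOrderedRing A]
    (n a : A) (hn : posInv n) (ha : posInv (cstarIm a)) :
    (star a * Ring.inverse (cstarIm a) * a ≤ n ↔
      invSqrt n * cstarIm a * invSqrt n +
        invSqrt n * cstarRe a * Ring.inverse (cstarIm a) * cstarRe a * invSqrt n ≤ 1) ∧
    (star a * Ring.inverse (cstarIm a) * a ≤ n ↔
      Ring.inverse n ≤ cstarIm (-(Ring.inverse a))) := by
  have hn : IsStrictlyPositive n := IsStrictlyPositive.iff_of_unital.mpr hn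
  have hIm : IsStrictlyPositive (ℑ a : A) := by
    rw [← cstarIm_eq_imaginaryPart]
    exact IsStrictlyPositive.iff_of_unital.mpr ha
  have haU : IsUnit a := isUnit_of_isStrictlyPositive_imaginaryPart hIm
  have hm : IsStrictlyPositive (star a * (ℑ a : A)⁻¹ʳ * a) :=
    haU.isStrictlyPositive_star_left_conjugate_iff.mpr hIm.ringInverse
  simp only [cstarIm_eq_imaginaryPart, cstarRe_eq_realPart]
  constructor
  · have hsum : invSqrt n * ℑ a * invSqrt n + invSqrt n * ℜ a * (ℑ a : A)⁻¹ʳ * ℜ a * invSqrt n =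
        CFC.conjSqrt n⁻¹ʳ (star a * (ℑ a : A)⁻¹ʳ * a) := by
      rw [star_mul_inverse_imaginaryPart_mul hIm.isUnit, ← invSqrt_mul_mul_invSqrt]
      noncomm_ring
    rw [hsum, ← CFC.conjSqrt_ringInverse_self n hn, CFC.conjSqrt_le_conjSqrt_iff hn.ringInverse]
  · rw [imaginaryPart_neg_ringInverse haU hIm.isUnit,
      CStarAlgebra.ringInverse_le_ringInverse_iff hn hm]
end

section
/- Let A be a unital C*-algebra and a = m + i n with m = m* and n > 0 (positive invertible). Then a is invertible and Im(a⁻¹) = −(m n⁻¹ m + n)⁻¹ < 0 and Re(a⁻¹) = n⁻¹ m (m n⁻¹ m + n)⁻¹. -/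
/-!
Writing `a = m + i n` and `k = m n⁻¹ m + n`, both `a* n⁻¹ a` and `a n⁻¹ a*` equal `k`: the cross
terms `± i m` cancel and `(i n) n⁻¹ (-i n) = n`. Since `k ≥ n > 0` is invertible, `a` has the left
inverse `k⁻¹ a* n⁻¹` and the right inverse `n⁻¹ a* k⁻¹`, which must coincide. Expanding
`a* = m - i n` turns this coincidence into `n⁻¹ m k⁻¹ = k⁻¹ m n⁻¹`, i.e. `n⁻¹ m k⁻¹` is
self-adjoint, so `a⁻¹ = n⁻¹ m k⁻¹ - i k⁻¹` is the decomposition of `a⁻¹` into real and imaginary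
parts.
-/

open Complex
open scoped Ring

lemma isUnit_and_ringInverse_eq_of_mul_eq_one {M₀ : Type*} [MonoidWithZero M₀] {a l r : M₀}
    (hl : l * a = 1) (hr : a * r = 1) : IsUnit a ∧ a⁻¹ʳ = l ∧ a⁻¹ʳ = r := by
  have ha : IsUnit a := isUnit_iff_exists_and_exists.mpr ⟨⟨r, hr⟩, ⟨l, hl⟩⟩
  exact ⟨ha, (left_inv_eq_right_inv hl (Ring.mul_inverse_cancel a ha)).symm,
    left_inv_eq_right_inv (Ring.inverse_mul_cancel a ha) hr⟩

section ComplexAlgebra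

variable {A : Type*} [Ring A] [Algebra ℂ A] {m n : A}

lemma sub_I_smul_mul_ringInverse_mul_add_I_smul (hn : IsUnit n) :
    (m - I • n) * n⁻¹ʳ * (m + I • n) = m * n⁻¹ʳ * m + n := by
  simp only [sub_mul, mul_add, smul_mul_assoc, mul_smul_comm, Ring.mul_inverse_cancel _ hn,
    Ring.inverse_mul_cancel_right _ _ hn, one_mul]
  match_scalars <;> simp

lemma add_I_smul_mul_ringInverse_mul_sub_I_smul (hn : IsUnit n) :
    (m + I • n) * n⁻¹ʳ * (m - I • n) = m * n⁻¹ʳ * m + n := by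
  simp only [add_mul, mul_sub, smul_mul_assoc, mul_smul_comm, Ring.mul_inverse_cancel _ hn,
    Ring.inverse_mul_cancel_right _ _ hn, one_mul]
  match_scalars <;> simp

lemma isUnit_add_I_smul_and_ringInverse_eq (hn : IsUnit n) (hk : IsUnit (m * n⁻¹ʳ * m + n)) :
    IsUnit (m + I • n) ∧
    (m + I • n)⁻¹ʳ = (m * n⁻¹ʳ * m + n)⁻¹ʳ * (m - I • n) * n⁻¹ʳ ∧
    (m + I • n)⁻¹ʳ = n⁻¹ʳ * (m - I • n) * (m * n⁻¹ʳ * m + n)⁻¹ʳ := by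
  refine isUnit_and_ringInverse_eq_of_mul_eq_one ?_ ?_
  · rw [mul_assoc, mul_assoc, ← mul_assoc (m - I • n), sub_I_smul_mul_ringInverse_mul_add_I_smul hn,
      Ring.inverse_mul_cancel _ hk]
  · rw [← mul_assoc, ← mul_assoc, add_I_smul_mul_ringInverse_mul_sub_I_smul hn,
      Ring.mul_inverse_cancel _ hk]

lemma ringInverse_mul_sub_I_smul_mul (hn : IsUnit n) (k : A) :
    n⁻¹ʳ * (m - I • n) * k = n⁻¹ʳ * m * k - I • k := by
  rw [mul_sub, mul_smul_comm, Ring.inverse_mul_cancel _ hn, sub_mul, smul_mul_assoc, one_mul]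

lemma mul_sub_I_smul_mul_ringInverse (hn : IsUnit n) (k : A) :
    k * (m - I • n) * n⁻¹ʳ = k * m * n⁻¹ʳ - I • k := by
  rw [mul_sub, mul_smul_comm, sub_mul, smul_mul_assoc, Ring.mul_inverse_cancel_right _ _ hn]

lemma ringInverse_add_I_smul_eq (hn : IsUnit n) (hk : IsUnit (m * n⁻¹ʳ * m + n)) :
    (m + I • n)⁻¹ʳ = n⁻¹ʳ * m * (m * n⁻¹ʳ * m + n)⁻¹ʳ + I • -(m * n⁻¹ʳ * m + n)⁻¹ʳ := by
  rw [(isUnit_add_I_smul_and_ringInverse_eq hn hk).2.2, ringInverse_mul_sub_I_smul_mul hn,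
    smul_neg, sub_eq_add_neg]

end ComplexAlgebra

lemma isSelfAdjoint_ringInverse_mul_mul_ringInverse {A : Type*} [Ring A] [StarRing A]
    [Algebra ℂ A] {m n : A} (hm : IsSelfAdjoint m) (hn_sa : IsSelfAdjoint n) (hn : IsUnit n)
    (hk : IsUnit (m * n⁻¹ʳ * m + n)) :
    IsSelfAdjoint (n⁻¹ʳ * m * (m * n⁻¹ʳ * m + n)⁻¹ʳ) := by
  obtain ⟨-, h_left, h_right⟩ := isUnit_add_I_smul_and_ringInverse_eq hn hk
  have hk_sa : IsSelfAdjoint (m * n⁻¹ʳ * m + n) :=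
    (hn_sa.ringInverse.conjugate_self hm).add hn_sa
  have h_symm : (m * n⁻¹ʳ * m + n)⁻¹ʳ * m * n⁻¹ʳ = n⁻¹ʳ * m * (m * n⁻¹ʳ * m + n)⁻¹ʳ := by
    have := h_left.symm.trans h_right
    rwa [mul_sub_I_smul_mul_ringInverse hn, ringInverse_mul_sub_I_smul_mul hn, sub_left_inj] at this
  rw [isSelfAdjoint_iff, star_mul, star_mul, hk_sa.ringInverse.star_eq, hm.star_eq,
    hn_sa.ringInverse.star_eq, ← mul_assoc, h_symm]

section CStarAlgebra

variable {A : Type*} [CStarAlgebra A] {u v : A}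

lemma cstarRe_add_I_smul (hu : IsSelfAdjoint u) (hv : IsSelfAdjoint v) :
    cstarRe (u + I • v) = u := by
  rw [cstarRe, star_add, star_smul, hu.star_eq, hv.star_eq, Complex.star_def, conj_I]
  match_scalars <;> ring

lemma cstarIm_add_I_smul (hu : IsSelfAdjoint u) (hv : IsSelfAdjoint v) :
    cstarIm (u + I • v) = v := by
  rw [cstarIm, star_add, star_smul, hu.star_eq, hv.star_eq, Complex.star_def, conj_I]
  match_scalars
  · ring
  · field_simp
    norm_num

end CStarAlgebra

theorem stmt_14 {A : Type*} [CStarAlgebra A] [PartialOrder A] [StarOrderedRing A]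
    (m n : A) (hm : IsSelfAdjoint m) (hn : posInv n) :
    IsUnit (m + Complex.I • n) ∧
    posInv (m * Ring.inverse n * m + n) ∧
    cstarIm (Ring.inverse (m + Complex.I • n))
      = -Ring.inverse (m * Ring.inverse n * m + n) ∧
    cstarRe (Ring.inverse (m + Complex.I • n))
      = Ring.inverse n * m * Ring.inverse (m * Ring.inverse n * m + n) := by
  have hn_pos : IsStrictlyPositive n := IsStrictlyPositive.iff_of_unital.mpr hn
  have hk_pos : IsStrictlyPositive (m * n⁻¹ʳ * m + n) :=
    hn_pos.nonneg_add (hm.conjugate_nonneg hn_pos.ringInverse.nonneg)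
  have h_re := isSelfAdjoint_ringInverse_mul_mul_ringInverse hm hn_pos.isSelfAdjoint hn.2
    hk_pos.isUnit
  have h_im : IsSelfAdjoint (-(m * n⁻¹ʳ * m + n)⁻¹ʳ) := hk_pos.ringInverse.isSelfAdjoint.neg
  refine ⟨(isUnit_add_I_smul_and_ringInverse_eq hn.2 hk_pos.isUnit).1,
    IsStrictlyPositive.iff_of_unital.mp hk_pos, ?_, ?_⟩
  · rw [ringInverse_add_I_smul_eq hn.2 hk_pos.isUnit, cstarIm_add_I_smul h_re h_im]
  · rw [ringInverse_add_I_smul_eq hn.2 hk_pos.isUnit, cstarRe_add_I_smul h_re h_im]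
end
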